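/- arXiv:2106.01294 — 4 statements merged into one kernel-verified Lean document; each statement's English description precedes it below -/
import Mathlib

section
/- Let 0 < C_ω < 1 and let ω : 𝔻 → (0,∞) be a C¹ weight satisfying (1−|z|²)|∇ω(z)| ≤ C_ω ω(z) for all z ∈ 𝔻. Let f be holomorphic on 𝔻 and K > 0 be such that |f′(z)|(1−|z|²)ω(z) ≤ K for all z ∈ 𝔻. Then ∫₀¹ sup_{a ∈ 𝔻, |z| ≤ r} ( ω(a) |f(φ_a(z)) − f(a)| )² dr < +∞. -/
open Complex MeasureTheory Set Filter

noncomputable section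

/-- The open unit disc in the complex plane. -/
def unitDisc : Set ℂ := Metric.ball 0 1

/-- The Möbius involution `φ_a(z) = (a - z)/(1 - conj(a) z)`. -/
def mobius (a z : ℂ) : ℂ := (a - z) / (1 - (starRingEnd ℂ) a * z)

/-- The hyperbolic distance on the unit disc. -/
def hypDist (a z : ℂ) : ℝ :=
  (1 / 2) * Real.log ((1 + ‖mobius a z‖) / (1 - ‖mobius a z‖))

/-- The `BMOA` Garsia-type seminorm squared at the point `a`, with normalized
area measure `dm = dx dy / π`. -/
def bmoaSemi (f : ℂ → ℂ) (a : ℂ) : ℝ :=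
  (Real.pi)⁻¹ * ∫ z in unitDisc, ‖deriv f z‖ ^ 2 * (1 - ‖mobius a z‖ ^ 2)

/-- `f` is an analytic function of bounded mean oscillation. -/
def IsBMOA (f : ℂ → ℂ) : Prop :=
  DifferentiableOn ℂ f unitDisc ∧ ∃ C : ℝ, ∀ a ∈ unitDisc, bmoaSemi f a ≤ C

/-- `f` is an analytic function of vanishing mean oscillation. -/
def IsVMOA (f : ℂ → ℂ) : Prop :=
  IsBMOA f ∧ ∀ ε > 0, ∃ r < 1, ∀ a ∈ unitDisc, r < ‖a‖ → bmoaSemi f a < ε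

/-- The Bloch quantity `|f'(z)| (1 - |z|²)`. -/
def blochSemi (f : ℂ → ℂ) (z : ℂ) : ℝ := ‖deriv f z‖ * (1 - ‖z‖ ^ 2)

/-- `f` belongs to the Bloch space. -/
def IsBloch (f : ℂ → ℂ) : Prop :=
  DifferentiableOn ℂ f unitDisc ∧ ∃ C : ℝ, ∀ z ∈ unitDisc, blochSemi f z ≤ C

/-- `f` belongs to the little Bloch space. -/
def IsLittleBloch (f : ℂ → ℂ) : Prop :=
  IsBloch f ∧ ∀ ε > 0, ∃ r < 1, ∀ z ∈ unitDisc, r < ‖z‖ → blochSemi f z < ε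

/-- The `BMOA` norm `|f(0)| + ‖f‖_*`. -/
def bmoaNorm (f : ℂ → ℂ) : ℝ :=
  ‖f 0‖ + Real.sqrt (⨆ a : unitDisc, bmoaSemi f (a : ℂ))

/-- The Bloch norm `|f(0)| + sup_z |f'(z)|(1-|z|²)`. -/
def blochNorm (f : ℂ → ℂ) : ℝ :=
  ‖f 0‖ + ⨆ z : unitDisc, blochSemi f (z : ℂ)

/-- `φ` is a semigroup of holomorphic self-maps of the unit disc. -/
def IsHoloSemigroup (φ : ℝ → ℂ → ℂ) : Prop :=
  (∀ t : ℝ, 0 ≤ t → DifferentiableOn ℂ (φ t) unitDisc ∧ MapsTo (φ t) unitDisc unitDisc) ∧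
  (∀ z ∈ unitDisc, φ 0 z = z) ∧
  (∀ t : ℝ, 0 ≤ t → ∀ s : ℝ, 0 ≤ s → ∀ z ∈ unitDisc, φ (t + s) z = φ t (φ s z)) ∧
  (∀ K ⊆ unitDisc, IsCompact K →
    TendstoUniformlyOn (fun t z => φ t z) id (nhdsWithin 0 (Ioi 0)) K)

/-- The maximal subspace of strong continuity `[φ_t, BMOA]`. -/
def maxSubspaceBMOA (φ : ℝ → ℂ → ℂ) : Set (ℂ → ℂ) :=
  {f | IsBMOA f ∧
    Tendsto (fun t => bmoaNorm (fun z => f (φ t z) - f z)) (nhdsWithin 0 (Ioi 0)) (nhds 0)}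

/-- The maximal subspace of strong continuity `[φ_t, 𝓑]`. -/
def maxSubspaceBloch (φ : ℝ → ℂ → ℂ) : Set (ℂ → ℂ) :=
  {f | IsBloch f ∧
    Tendsto (fun t => blochNorm (fun z => f (φ t z) - f z)) (nhdsWithin 0 (Ioi 0)) (nhds 0)}

/-- `G` is the infinitesimal generator of the semigroup `φ`. -/
def IsGenerator (φ : ℝ → ℂ → ℂ) (G : ℂ → ℂ) : Prop :=
  DifferentiableOn ℂ G unitDisc ∧
  ∀ z ∈ unitDisc,
    Tendsto (fun t : ℝ => (φ t z - z) / (t : ℂ)) (nhdsWithin 0 (Ioi 0)) (nhds (G z))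

/-- The semigroup is elliptic: its Denjoy–Wolff point lies in the disc. -/
def IsElliptic (φ : ℝ → ℂ → ℂ) : Prop :=
  ∃ τ ∈ unitDisc, ∀ t : ℝ, 0 ≤ t → φ t τ = τ

/-- The logarithmic vanishing Bloch condition (LVB) on a generator `G`. -/
def LVB (G : ℂ → ℂ) : Prop :=
  ∀ ε > 0, ∃ r < 1, ∀ z ∈ unitDisc, r < ‖z‖ →
    (1 - ‖z‖ ^ 2) / ‖G z‖ * Real.log (1 / (1 - ‖z‖ ^ 2)) < ε

/-- The logarithmic vanishing mean oscillation condition (LVMO) on a generator `G`. -/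
def LVMO (G : ℂ → ℂ) : Prop :=
  ∀ ε > 0, ∃ r < 1, ∀ a ∈ unitDisc, r < ‖a‖ →
    (Real.log (Real.exp 1 / (1 - ‖a‖ ^ 2))) ^ 2 *
      ((Real.pi)⁻¹ * ∫ z in unitDisc, (1 - ‖mobius a z‖ ^ 2) / ‖G z‖ ^ 2) < ε

/-- `f` belongs to the logarithmic little Bloch space `𝓑_{log,0}`. -/
def InBlochLog0 (f : ℂ → ℂ) : Prop :=
  ∀ ε > 0, ∃ r < 1, ∀ z ∈ unitDisc, r < ‖z‖ →
    ‖deriv f z‖ * (1 - ‖z‖ ^ 2) * Real.log (Real.exp 1 / (1 - ‖z‖ ^ 2)) < ε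

/-- `f` belongs to `VMOA_log`. -/
def InVMOAlog (f : ℂ → ℂ) : Prop :=
  ∀ ε > 0, ∃ r < 1, ∀ a ∈ unitDisc, r < ‖a‖ →
    (Real.log (Real.exp 1 / (1 - ‖a‖ ^ 2))) ^ 2 * bmoaSemi f a < ε

/-- Hyperbolic midpoint of the segment `[0, w]`. -/
def wstar (w : ℂ) : ℂ :=
  (((1 - Real.sqrt (1 - ‖w‖ ^ 2)) / ‖w‖ ^ 2 : ℝ) : ℂ) * w

/-- The building-block function `β_w(z) = Log(e / (1 + conj(w) φ_{w*}(z)))`. -/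
def betaB (w z : ℂ) : ℂ :=
  Complex.log ((Real.exp 1 : ℂ) / (1 + (starRingEnd ℂ) w * mobius (wstar w) z))

/-- The (invariant) Carleson box `S(I_u)` associated with a point `u ∈ 𝔻 \ {0}`. -/
def carlesonBox (u : ℂ) : Set ℂ :=
  {z ∈ unitDisc | ((starRingEnd ℂ) u * mobius u z).re ≤ 0}

/-- The generalized Volterra operator `T_g f(z) = ∫₀^z f(ζ) g'(ζ) dζ`. -/
def volterra (g f : ℂ → ℂ) (z : ℂ) : ℂ :=
  z * ∫ t in (0:ℝ)..1, f ((t : ℂ) * z) * deriv g ((t : ℂ) * z)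

/-!
For the hyperbolic metric `ds = |dz| / (1 - |z|²)`, the regularity condition says that `log ω` is
`C_ω`-Lipschitz and the bound on `f'` says that `ω |df| ≤ K ds`. Both conditions are invariant
under the disc automorphisms `φ_a`, which reduces everything to `a = 0`. Along the radius `[0, z]`,
of hyperbolic length `artanh |z|`, the first gives `ω(0) ≤ ω(tz) exp (C_ω artanh (t|z|))`, and
integrating the second then gives
`ω(a) |f(φ_a z) - f(a)| ≤ (K / C_ω) (exp (C_ω artanh |z|) - 1) ≲ (1 - |z|)^(-C_ω/2)`,
whose square is integrable on `(0, 1)` since `C_ω < 1`.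
-/

lemma mem_unitDisc_iff {z : ℂ} : z ∈ unitDisc ↔ ‖z‖ < 1 := mem_ball_zero_iff

lemma isOpen_unitDisc : IsOpen unitDisc := Metric.isOpen_ball

lemma zero_mem_unitDisc : (0 : ℂ) ∈ unitDisc := by simp [mem_unitDisc_iff]

lemma one_sub_norm_sq_pos {z : ℂ} (hz : z ∈ unitDisc) : 0 < 1 - ‖z‖ ^ 2 := by
  nlinarith [norm_nonneg z, mem_unitDisc_iff.mp hz]

lemma norm_ofReal_mul {t : ℝ} (ht : 0 ≤ t) (z : ℂ) : ‖(t : ℂ) * z‖ = t * ‖z‖ := by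
  rw [norm_mul, norm_real, Real.norm_of_nonneg ht]

lemma ofReal_mul_mem_unitDisc {t : ℝ} (ht : t ∈ Icc (0 : ℝ) 1) {z : ℂ} (hz : z ∈ unitDisc) :
    (t : ℂ) * z ∈ unitDisc := by
  rw [mem_unitDisc_iff, norm_ofReal_mul ht.1]
  nlinarith [norm_nonneg z, ht.2, mem_unitDisc_iff.mp hz]

lemma hasDerivAt_ofReal_mul (z : ℂ) (t : ℝ) : HasDerivAt (fun u : ℝ => (u : ℂ) * z) z t := by
  simpa using (hasDerivAt_id (t : ℂ)).comp_ofReal.mul_const z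

section Mobius

variable {a z : ℂ}

@[simp]
lemma mobius_zero_right (a : ℂ) : mobius a 0 = a := by simp [mobius]

lemma one_sub_conj_mul_ne_zero (ha : ‖a‖ < 1) (hz : ‖z‖ ≤ 1) :
    1 - starRingEnd ℂ a * z ≠ 0 := by
  intro h
  have h1 : ‖starRingEnd ℂ a * z‖ = 1 := by rw [← sub_eq_zero.mp h, norm_one]
  rw [norm_mul, RCLike.norm_conj] at h1
  nlinarith [norm_nonneg z, norm_nonneg a]

lemma norm_one_sub_conj_mul_sq_sub_norm_sub_sq (a z : ℂ) :
    ‖1 - starRingEnd ℂ a * z‖ ^ 2 - ‖a - z‖ ^ 2 = (1 - ‖a‖ ^ 2) * (1 - ‖z‖ ^ 2) := by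
  simp only [Complex.sq_norm, normSq_apply, sub_re, sub_im, mul_re, mul_im, one_re, one_im,
    conj_re, conj_im]
  ring

lemma one_sub_norm_mobius_sq (ha : ‖a‖ < 1) (hz : ‖z‖ ≤ 1) :
    1 - ‖mobius a z‖ ^ 2 = (1 - ‖a‖ ^ 2) * (1 - ‖z‖ ^ 2) / ‖1 - starRingEnd ℂ a * z‖ ^ 2 := by
  have hD : ‖1 - starRingEnd ℂ a * z‖ ^ 2 ≠ 0 := by
    simpa using one_sub_conj_mul_ne_zero ha hz
  rw [← norm_one_sub_conj_mul_sq_sub_norm_sub_sq, mobius, norm_div, div_pow, sub_div,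
    div_self hD]

lemma mobius_mem_unitDisc (ha : a ∈ unitDisc) (hz : z ∈ unitDisc) : mobius a z ∈ unitDisc := by
  have hpos : 0 < 1 - ‖mobius a z‖ ^ 2 := by
    rw [one_sub_norm_mobius_sq (mem_unitDisc_iff.mp ha) (mem_unitDisc_iff.mp hz).le]
    have := one_sub_norm_sq_pos ha
    have := one_sub_norm_sq_pos hz
    have := one_sub_conj_mul_ne_zero (mem_unitDisc_iff.mp ha) (mem_unitDisc_iff.mp hz).le
    positivity
  rw [mem_unitDisc_iff]
  nlinarith [norm_nonneg (mobius a z)]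

lemma hasDerivAt_mobius (a : ℂ) (h : 1 - starRingEnd ℂ a * z ≠ 0) :
    HasDerivAt (mobius a) ((starRingEnd ℂ a * a - 1) / (1 - starRingEnd ℂ a * z) ^ 2) z := by
  have hnum : HasDerivAt (fun w : ℂ => a - w) (-1) z := by
    simpa using (hasDerivAt_id z).const_sub a
  have hden : HasDerivAt (fun w : ℂ => 1 - starRingEnd ℂ a * w) (-starRingEnd ℂ a) z := by
    simpa using ((hasDerivAt_id z).const_mul (starRingEnd ℂ a)).const_sub 1
  exact (hnum.div hden h).congr_deriv (by ring)

lemma differentiableAt_mobius (ha : a ∈ unitDisc) (hz : z ∈ unitDisc) :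
    DifferentiableAt ℂ (mobius a) z :=
  (hasDerivAt_mobius a (one_sub_conj_mul_ne_zero (mem_unitDisc_iff.mp ha)
    (mem_unitDisc_iff.mp hz).le)).differentiableAt

lemma norm_deriv_mobius_mul (ha : ‖a‖ < 1) (hz : ‖z‖ ≤ 1) :
    ‖deriv (mobius a) z‖ * (1 - ‖z‖ ^ 2) = 1 - ‖mobius a z‖ ^ 2 := by
  have hnum : starRingEnd ℂ a * a - 1 = ((‖a‖ ^ 2 - 1 : ℝ) : ℂ) := by
    rw [mul_comm, mul_conj, normSq_eq_norm_sq]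
    push_cast
    ring
  rw [(hasDerivAt_mobius a (one_sub_conj_mul_ne_zero ha hz)).deriv, one_sub_norm_mobius_sq ha hz,
    norm_div, norm_pow, hnum, norm_real, Real.norm_of_nonpos (by nlinarith [norm_nonneg a])]
  ring

lemma blochSemi_comp_mobius (ha : a ∈ unitDisc) (hz : z ∈ unitDisc) {f : ℂ → ℂ}
    (hf : DifferentiableAt ℂ f (mobius a z)) :
    blochSemi (fun w => f (mobius a w)) z = blochSemi f (mobius a z) := by
  have hderiv : deriv (fun w => f (mobius a w)) z = deriv f (mobius a z) * deriv (mobius a) z :=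
    (hf.hasDerivAt.comp z (differentiableAt_mobius ha hz).hasDerivAt).deriv
  rw [blochSemi, blochSemi, hderiv, norm_mul, mul_assoc,
    norm_deriv_mobius_mul (mem_unitDisc_iff.mp ha) (mem_unitDisc_iff.mp hz).le]

end Mobius

lemma Real.hasDerivAt_artanh {x : ℝ} (hx : x ∈ Ioo (-1) 1) :
    HasDerivAt Real.artanh (1 / (1 - x ^ 2)) x := by
  have heq : Real.artanh =ᶠ[nhds x] fun y => 1 / 2 * (Real.log (1 + y) - Real.log (1 - y)) := by
    filter_upwards [isOpen_Ioo.mem_nhds hx] with y hy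
    rw [Real.artanh_eq_half_log (Ioo_subset_Icc_self hy),
      Real.log_div (by linarith [hy.1]) (by linarith [hy.2])]
  have hp : 0 < 1 + x := by linarith [hx.1]
  have hm : 0 < 1 - x := by linarith [hx.2]
  have hlogp := ((hasDerivAt_id x).const_add 1).log hp.ne'
  have hlogm := ((hasDerivAt_id x).const_sub 1).log hm.ne'
  refine (((hlogp.sub hlogm).const_mul (1 / 2)).congr_of_eventuallyEq heq).congr_deriv ?_
  rw [id, show 1 - x ^ 2 = (1 + x) * (1 - x) by ring]
  field_simp
  ring

lemma hasDerivAt_artanh_mul {s t : ℝ} (h : t * s ∈ Ioo (-1) 1) :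
    HasDerivAt (fun u => Real.artanh (u * s)) (s / (1 - (t * s) ^ 2)) t := by
  refine ((Real.hasDerivAt_artanh h).comp t ((hasDerivAt_id t).mul_const s)).congr_deriv ?_
  ring

lemma mul_norm_mem_Ioo {t : ℝ} (ht : t ∈ Icc (0 : ℝ) 1) {z : ℂ} (hz : z ∈ unitDisc) :
    t * ‖z‖ ∈ Ioo (-1) 1 := by
  rw [← norm_ofReal_mul ht.1, mem_Ioo, ← abs_lt, abs_norm, ← mem_unitDisc_iff]
  exact ofReal_mul_mem_unitDisc ht hz

lemma Real.exp_mul_artanh_sq_le {c r : ℝ} (hc : 0 ≤ c) (hr₀ : 0 ≤ r) (hr : r < 1) :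
    Real.exp (c * Real.artanh r) ^ 2 ≤ 2 ^ c * (1 - r) ^ (-c) := by
  have h1r : 0 < 1 - r := by linarith
  have hexp : Real.exp (Real.artanh r) ^ 2 = (1 + r) / (1 - r) := by
    rw [Real.exp_artanh ⟨by linarith, hr⟩, Real.sq_sqrt (by positivity)]
  calc Real.exp (c * Real.artanh r) ^ 2 = ((1 + r) / (1 - r)) ^ c := by
        rw [← hexp, mul_comm, Real.exp_mul, ← Real.rpow_natCast, ← Real.rpow_natCast,
          ← Real.rpow_mul (Real.exp_pos _).le, ← Real.rpow_mul (Real.exp_pos _).le, mul_comm]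
    _ ≤ (2 / (1 - r)) ^ c := by gcongr; linarith
    _ = 2 ^ c * (1 - r) ^ (-c) := by
        rw [div_eq_mul_inv, Real.mul_rpow zero_le_two (by positivity), Real.inv_rpow h1r.le,
          Real.rpow_neg h1r.le]

lemma integrableOn_one_sub_rpow_neg {c : ℝ} (hc : c < 1) :
    IntegrableOn (fun r : ℝ => (1 - r) ^ (-c)) (Ioo 0 1) := by
  have h := (intervalIntegral.intervalIntegrable_rpow' (a := 0) (b := 1)
    (show -1 < -c by linarith)).comp_sub_left 1
  rw [sub_self, sub_zero, intervalIntegrable_iff, uIoc_comm, uIoc_of_le zero_le_one] at h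
  exact h.mono_set Ioo_subset_Ioc_self

structure IsRegularWeight (C : ℝ) (ω : ℂ → ℝ) : Prop where
  pos : ∀ z ∈ unitDisc, 0 < ω z
  differentiableOn : DifferentiableOn ℝ ω unitDisc
  norm_fderiv_le : ∀ z ∈ unitDisc, (1 - ‖z‖ ^ 2) * ‖fderiv ℝ ω z‖ ≤ C * ω z

namespace IsRegularWeight

variable {C : ℝ} {ω : ℂ → ℝ}

lemma of_contDiffOn (hpos : ∀ z ∈ unitDisc, 0 < ω z) (hω : ContDiffOn ℝ 1 ω unitDisc)
    (hreg : ∀ z ∈ unitDisc, (1 - ‖z‖ ^ 2) * ‖fderivWithin ℝ ω unitDisc z‖ ≤ C * ω z) :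
    IsRegularWeight C ω where
  pos := hpos
  differentiableOn := hω.differentiableOn one_ne_zero
  norm_fderiv_le z hz := by
    simpa only [fderivWithin_of_isOpen isOpen_unitDisc hz] using hreg z hz

lemma differentiableAt (hω : IsRegularWeight C ω) {z : ℂ} (hz : z ∈ unitDisc) :
    DifferentiableAt ℝ ω z :=
  hω.differentiableOn.differentiableAt (isOpen_unitDisc.mem_nhds hz)

lemma comp_mobius (hω : IsRegularWeight C ω) {a : ℂ} (ha : a ∈ unitDisc) :
    IsRegularWeight C (fun z => ω (mobius a z)) where
  pos z hz := hω.pos _ (mobius_mem_unitDisc ha hz)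
  differentiableOn z hz :=
    ((hω.differentiableAt (mobius_mem_unitDisc ha hz)).comp z
      ((differentiableAt_mobius ha hz).restrictScalars ℝ)).differentiableWithinAt
  norm_fderiv_le z hz := by
    have hw := mobius_mem_unitDisc ha hz
    have hchain : fderiv ℝ (fun z => ω (mobius a z)) z
        = (fderiv ℝ ω (mobius a z)).comp ((fderiv ℂ (mobius a) z).restrictScalars ℝ) :=
      ((hω.differentiableAt hw).hasFDerivAt.comp z
        ((differentiableAt_mobius ha hz).hasFDerivAt.restrictScalars ℝ)).fderiv
    have hnorm : ‖fderiv ℝ (fun z => ω (mobius a z)) z‖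
        ≤ ‖fderiv ℝ ω (mobius a z)‖ * ‖deriv (mobius a) z‖ := by
      rw [hchain, norm_deriv_eq_norm_fderiv,
        ← ContinuousLinearMap.norm_restrictScalars (𝕜' := ℝ) (fderiv ℂ (mobius a) z)]
      exact ContinuousLinearMap.opNorm_comp_le _ _
    have hz1 := (one_sub_norm_sq_pos hz).le
    calc (1 - ‖z‖ ^ 2) * ‖fderiv ℝ (fun z => ω (mobius a z)) z‖
        ≤ (1 - ‖z‖ ^ 2) * (‖fderiv ℝ ω (mobius a z)‖ * ‖deriv (mobius a) z‖) := by gcongr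
      _ = (1 - ‖mobius a z‖ ^ 2) * ‖fderiv ℝ ω (mobius a z)‖ := by
        rw [← norm_deriv_mobius_mul (mem_unitDisc_iff.mp ha) (mem_unitDisc_iff.mp hz).le]
        ring
      _ ≤ C * ω (mobius a z) := hω.norm_fderiv_le _ hw

lemma neg_fderiv_apply_div_le (hω : IsRegularWeight C ω) {w : ℂ} (hw : w ∈ unitDisc) (v : ℂ) :
    -(fderiv ℝ ω w v / ω w) ≤ C * (‖v‖ / (1 - ‖w‖ ^ 2)) := by
  set L := fderiv ℝ ω w
  have hq := one_sub_norm_sq_pos hw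
  have hωw := hω.pos w hw
  have hLv : -L v ≤ ‖L‖ * ‖v‖ := (neg_le_abs _).trans (L.le_opNorm v)
  calc -(L v / ω w) = -L v / ω w := (neg_div _ _).symm
    _ ≤ ‖L‖ * ‖v‖ / ω w := by gcongr
    _ = (1 - ‖w‖ ^ 2) * ‖L‖ * (‖v‖ / (1 - ‖w‖ ^ 2)) / ω w := by
      rw [mul_comm (1 - _), mul_assoc, mul_div_cancel₀ _ hq.ne']
    _ ≤ C * ω w * (‖v‖ / (1 - ‖w‖ ^ 2)) / ω w := by
      gcongr ?_ * _ / _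
      exact hω.norm_fderiv_le w hw
    _ = C * (‖v‖ / (1 - ‖w‖ ^ 2)) := by field_simp

lemma le_mul_exp_artanh (hω : IsRegularWeight C ω) {z : ℂ} (hz : z ∈ unitDisc) :
    ω 0 ≤ ω z * Real.exp (C * Real.artanh ‖z‖) := by
  have hray : ∀ t ∈ Icc (0 : ℝ) 1, (t : ℂ) * z ∈ unitDisc := fun t ht =>
    ofReal_mul_mem_unitDisc ht hz
  have hlog : ∀ t ∈ Icc (0 : ℝ) 1,
      HasDerivAt (fun u : ℝ => Real.log (ω 0) - Real.log (ω (u * z)))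
        (-(fderiv ℝ ω (t * z) z / ω (t * z))) t := fun t ht =>
    (((hω.differentiableAt (hray t ht)).hasFDerivAt.comp_hasDerivAt t
      (hasDerivAt_ofReal_mul z t)).log (hω.pos _ (hray t ht)).ne').const_sub _
  have hbdry : ∀ t ∈ Icc (0 : ℝ) 1, HasDerivAt (fun u => C * Real.artanh (u * ‖z‖))
      (C * (‖z‖ / (1 - (t * ‖z‖) ^ 2))) t := fun t ht =>
    (hasDerivAt_artanh_mul (mul_norm_mem_Ioo ht hz)).const_mul C
  have hslope : ∀ t ∈ Ico (0 : ℝ) 1,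
      -(fderiv ℝ ω (t * z) z / ω (t * z)) ≤ C * (‖z‖ / (1 - (t * ‖z‖) ^ 2)) := fun t ht => by
    simpa only [norm_ofReal_mul ht.1] using
      hω.neg_fderiv_apply_div_le (hray t (Ico_subset_Icc_self ht)) z
  have hfence := image_le_of_deriv_right_le_deriv_boundary
    (fun t ht => (hlog t ht).continuousAt.continuousWithinAt)
    (fun t ht => (hlog t (Ico_subset_Icc_self ht)).hasDerivWithinAt)
    (by simp) (fun t ht => (hbdry t ht).continuousAt.continuousWithinAt)
    (fun t ht => (hbdry t (Ico_subset_Icc_self ht)).hasDerivWithinAt) hslope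
    (right_mem_Icc.mpr zero_le_one)
  simp only [ofReal_one, one_mul] at hfence
  calc ω 0 = Real.exp (Real.log (ω 0)) := (Real.exp_log (hω.pos 0 zero_mem_unitDisc)).symm
    _ ≤ Real.exp (Real.log (ω z) + C * Real.artanh ‖z‖) := Real.exp_le_exp.mpr (by linarith)
    _ = ω z * Real.exp (C * Real.artanh ‖z‖) := by
      rw [Real.exp_add, Real.exp_log (hω.pos z hz)]

lemma mul_norm_deriv_le (hω : IsRegularWeight C ω) {f : ℂ → ℂ} {K : ℝ}
    (hbd : ∀ z ∈ unitDisc, blochSemi f z * ω z ≤ K) {w : ℂ} (hw : w ∈ unitDisc) :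
    ω 0 * ‖deriv f w‖ ≤ K * Real.exp (C * Real.artanh ‖w‖) / (1 - ‖w‖ ^ 2) := by
  have hq := one_sub_norm_sq_pos hw
  rw [le_div_iff₀ hq]
  calc ω 0 * ‖deriv f w‖ * (1 - ‖w‖ ^ 2)
      ≤ ω w * Real.exp (C * Real.artanh ‖w‖) * ‖deriv f w‖ * (1 - ‖w‖ ^ 2) := by
        gcongr
        exact hω.le_mul_exp_artanh hw
    _ = blochSemi f w * ω w * Real.exp (C * Real.artanh ‖w‖) := by rw [blochSemi]; ring
    _ ≤ K * Real.exp (C * Real.artanh ‖w‖) := by gcongr; exact hbd w hw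

lemma mul_norm_sub_le (hω : IsRegularWeight C ω) (hC : 0 < C) {f : ℂ → ℂ}
    (hf : DifferentiableOn ℂ f unitDisc) {K : ℝ}
    (hbd : ∀ z ∈ unitDisc, blochSemi f z * ω z ≤ K) {z : ℂ} (hz : z ∈ unitDisc) :
    ω 0 * ‖f z - f 0‖ ≤ K / C * (Real.exp (C * Real.artanh ‖z‖) - 1) := by
  set E : ℝ → ℝ := fun t => Real.exp (C * Real.artanh (t * ‖z‖))
  have hray : ∀ t ∈ Icc (0 : ℝ) 1, (t : ℂ) * z ∈ unitDisc := fun t ht =>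
    ofReal_mul_mem_unitDisc ht hz
  have hpath : ∀ t ∈ Icc (0 : ℝ) 1, HasDerivAt (fun u : ℝ => (ω 0 : ℂ) * (f (u * z) - f 0))
      ((ω 0 : ℂ) * (deriv f (t * z) * z)) t := fun t ht =>
    (((hf.differentiableAt (isOpen_unitDisc.mem_nhds (hray t ht))).hasDerivAt.comp t
      (hasDerivAt_ofReal_mul z t)).sub_const _).const_mul _
  have hbdry : ∀ t ∈ Icc (0 : ℝ) 1, HasDerivAt (fun u => K / C * (E u - 1))
      (K / C * (E t * (C * (‖z‖ / (1 - (t * ‖z‖) ^ 2))))) t := fun t ht =>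
    ((((hasDerivAt_artanh_mul (mul_norm_mem_Ioo ht hz)).const_mul C).exp).sub_const 1).const_mul _
  have hslope : ∀ t ∈ Ico (0 : ℝ) 1, ‖(ω 0 : ℂ) * (deriv f (t * z) * z)‖
      ≤ K / C * (E t * (C * (‖z‖ / (1 - (t * ‖z‖) ^ 2)))) := fun t ht => by
    have hderiv := hω.mul_norm_deriv_le hbd (hray t (Ico_subset_Icc_self ht))
    rw [norm_ofReal_mul ht.1] at hderiv
    calc ‖(ω 0 : ℂ) * (deriv f (t * z) * z)‖ = ω 0 * ‖deriv f (t * z)‖ * ‖z‖ := by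
          rw [norm_mul, norm_mul, norm_real, Real.norm_of_nonneg (hω.pos 0 zero_mem_unitDisc).le,
            mul_assoc]
      _ ≤ K * E t / (1 - (t * ‖z‖) ^ 2) * ‖z‖ := by gcongr
      _ = K / C * (E t * (C * (‖z‖ / (1 - (t * ‖z‖) ^ 2)))) := by field_simp
  have hfence := image_norm_le_of_norm_deriv_right_le_deriv_boundary'
    (fun t ht => (hpath t ht).continuousAt.continuousWithinAt)
    (fun t ht => (hpath t (Ico_subset_Icc_self ht)).hasDerivWithinAt)
    (by simp [E]) (fun t ht => (hbdry t ht).continuousAt.continuousWithinAt)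
    (fun t ht => (hbdry t (Ico_subset_Icc_self ht)).hasDerivWithinAt) hslope
    (right_mem_Icc.mpr zero_le_one)
  simpa [E, Real.norm_of_nonneg (hω.pos 0 zero_mem_unitDisc).le] using hfence

lemma mul_norm_sub_mobius_le (hω : IsRegularWeight C ω) (hC : 0 < C) {f : ℂ → ℂ}
    (hf : DifferentiableOn ℂ f unitDisc) {K : ℝ}
    (hbd : ∀ z ∈ unitDisc, blochSemi f z * ω z ≤ K) {a z : ℂ} (ha : a ∈ unitDisc)
    (hz : z ∈ unitDisc) :
    ω a * ‖f (mobius a z) - f a‖ ≤ K / C * (Real.exp (C * Real.artanh ‖z‖) - 1) := by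
  have hmaps : MapsTo (mobius a) unitDisc unitDisc := fun w hw => mobius_mem_unitDisc ha hw
  have hfa : DifferentiableOn ℂ (fun w => f (mobius a w)) unitDisc :=
    hf.comp (fun w hw => (differentiableAt_mobius ha hw).differentiableWithinAt) hmaps
  have hbda : ∀ w ∈ unitDisc, blochSemi (fun w => f (mobius a w)) w * ω (mobius a w) ≤ K :=
    fun w hw => by
      rw [blochSemi_comp_mobius ha hw (hf.differentiableAt (isOpen_unitDisc.mem_nhds (hmaps hw)))]
      exact hbd _ (hmaps hw)
  simpa using (hω.comp_mobius ha).mul_norm_sub_le hC hfa hbda hz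

lemma sq_mul_norm_sub_mobius_le (hω : IsRegularWeight C ω) (hC : 0 < C) {f : ℂ → ℂ}
    (hf : DifferentiableOn ℂ f unitDisc) {K : ℝ}
    (hbd : ∀ z ∈ unitDisc, blochSemi f z * ω z ≤ K) {a z : ℂ} (ha : a ∈ unitDisc) {r : ℝ}
    (hzr : ‖z‖ ≤ r) (hr : r < 1) :
    (ω a * ‖f (mobius a z) - f a‖) ^ 2 ≤ (K / C) ^ 2 * (2 ^ C * (1 - r) ^ (-C)) := by
  have hz : z ∈ unitDisc := mem_unitDisc_iff.mpr (hzr.trans_lt hr)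
  have hart : Real.artanh ‖z‖ ≤ Real.artanh r :=
    Real.artanh_le_artanh (by linarith [norm_nonneg z]) hr hzr
  have hE : 0 ≤ Real.exp (C * Real.artanh ‖z‖) - 1 :=
    sub_nonneg.mpr (Real.one_le_exp (mul_nonneg hC.le (Real.artanh_nonneg (norm_nonneg z))))
  have hEr : Real.exp (C * Real.artanh ‖z‖) - 1 ≤ Real.exp (C * Real.artanh r) := by
    linarith [Real.exp_le_exp.mpr (mul_le_mul_of_nonneg_left hart hC.le)]
  calc (ω a * ‖f (mobius a z) - f a‖) ^ 2
      ≤ (K / C * (Real.exp (C * Real.artanh ‖z‖) - 1)) ^ 2 :=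
        pow_le_pow_left₀ (mul_nonneg (hω.pos a ha).le (norm_nonneg _))
          (hω.mul_norm_sub_mobius_le hC hf hbd ha hz) 2
    _ = (K / C) ^ 2 * (Real.exp (C * Real.artanh ‖z‖) - 1) ^ 2 := mul_pow _ _ _
    _ ≤ (K / C) ^ 2 * Real.exp (C * Real.artanh r) ^ 2 := by gcongr
    _ ≤ (K / C) ^ 2 * (2 ^ C * (1 - r) ^ (-C)) := by
        gcongr
        exact Real.exp_mul_artanh_sq_le hC.le ((norm_nonneg z).trans hzr) hr

end IsRegularWeight

theorem integral_sup_sq_hyperbolic_translation_lt_top_general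
    (Cw : ℝ) (hCpos : 0 < Cw) (hClt : Cw < 1)
    (ω : ℂ → ℝ) (hωpos : ∀ z ∈ unitDisc, 0 < ω z)
    (hωC1 : ContDiffOn ℝ 1 ω unitDisc)
    (hreg : ∀ z ∈ unitDisc, (1 - ‖z‖ ^ 2) * ‖fderivWithin ℝ ω unitDisc z‖ ≤ Cw * ω z)
    (f : ℂ → ℂ) (hf : DifferentiableOn ℂ f unitDisc)
    (K : ℝ)
    (hbd : ∀ z ∈ unitDisc, ‖deriv f z‖ * (1 - ‖z‖ ^ 2) * ω z ≤ K) :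
    (∫⁻ r in Set.Ioo (0 : ℝ) 1,
        ⨆ (a : ℂ) (_ : a ∈ unitDisc) (z : ℂ) (_ : ‖z‖ ≤ r),
          ENNReal.ofReal ((ω a * ‖f (mobius a z) - f a‖) ^ 2)) < ⊤ := by
  have hω := IsRegularWeight.of_contDiffOn hωpos hωC1 hreg
  have hbound : ∀ r ∈ Ioo (0 : ℝ) 1,
      (⨆ (a : ℂ) (_ : a ∈ unitDisc) (z : ℂ) (_ : ‖z‖ ≤ r),
        ENNReal.ofReal ((ω a * ‖f (mobius a z) - f a‖) ^ 2))
      ≤ ENNReal.ofReal ((K / Cw) ^ 2 * (2 ^ Cw * (1 - r) ^ (-Cw))) := fun r hr =>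
    iSup₂_le fun a ha => iSup₂_le fun z hz => ENNReal.ofReal_le_ofReal
      (hω.sq_mul_norm_sub_mobius_le hCpos hf hbd ha hz hr.2)
  calc _ ≤ ∫⁻ r in Ioo (0 : ℝ) 1, ENNReal.ofReal ((K / Cw) ^ 2 * (2 ^ Cw * (1 - r) ^ (-Cw))) :=
        setLIntegral_mono' measurableSet_Ioo hbound
    _ < ⊤ := IntegrableOn.setLIntegral_lt_top
        (((integrableOn_one_sub_rpow_neg hClt).const_mul _).const_mul _)

/-- For a regular weight `ω` with constant `C_ω < 1` and `f` holomorphic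
with `|f'(z)|(1-|z|²)ω(z) ≤ K`, the integral
`∫₀¹ sup_{a ∈ 𝔻, |z| ≤ r} (ω(a)|f_a(z)|)² dr` is finite. -/
theorem integral_sup_sq_hyperbolic_translation_lt_top
    (Cw : ℝ) (hCpos : 0 < Cw) (hClt : Cw < 1)
    (ω : ℂ → ℝ) (hωpos : ∀ z ∈ unitDisc, 0 < ω z)
    (hωC1 : ContDiffOn ℝ 1 ω unitDisc)
    (hreg : ∀ z ∈ unitDisc, (1 - ‖z‖ ^ 2) * ‖fderivWithin ℝ ω unitDisc z‖ ≤ Cw * ω z)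
    (f : ℂ → ℂ) (hf : DifferentiableOn ℂ f unitDisc)
    (K : ℝ) (hK : 0 < K)
    (hbd : ∀ z ∈ unitDisc, ‖deriv f z‖ * (1 - ‖z‖ ^ 2) * ω z ≤ K) :
    (∫⁻ r in Set.Ioo (0 : ℝ) 1,
        ⨆ (a : ℂ) (_ : a ∈ unitDisc) (z : ℂ) (_ : ‖z‖ ≤ r),
          ENNReal.ofReal ((ω a * ‖f (mobius a z) - f a‖) ^ 2)) < ⊤ :=
  integral_sup_sq_hyperbolic_translation_lt_top_general Cw hCpos hClt ω hωpos hωC1 hreg f hf K hbd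
end
end

section
/- There exist absolute constants c₁, c₂ > 0 such that for every w ∈ 𝔻 \ {0} and every z in the Carleson box S(I_w), c₁ log(e/(1−|w|²)) ≤ Re β_w(z) ≤ c₂ log(e/(1−|w|²)). -/
open Complex MeasureTheory Set Filter

noncomputable section

/-! Put `q = √(1 - ‖w‖²)`, so that `w* = w / (1 + q)`, and `ζ = conj w * z`. In the variable `ζ`
the Carleson box `S(I_w)` is the closed disc with diameter `[‖w‖², 1]`, and
`E = 1 + conj w * φ_{w*}(z) = ((2 - q)(1 + q) - (2 + q)ζ) / ((1 + q) - ζ)` is a Möbius map taking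
that disc into the disc of radius `q` (an Apollonius circle). On the other hand
`‖E‖ ≥ 1 - ‖w‖ ≥ (1 - ‖w‖²) / 2` because `φ_{w*}` maps the disc into itself. Hence
`Re β_w(z) = log (e / ‖E‖)` lies between `log (e / √(1 - ‖w‖²))` and `log (2e / (1 - ‖w‖²))`,
both comparable to `log (e / (1 - ‖w‖²))`. -/

open ComplexConjugate

lemma norm_conj_mul_lt_one {w z : ℂ} (hw : ‖w‖ < 1) (hz : ‖z‖ < 1) : ‖conj w * z‖ < 1 := by
  rw [norm_mul, RCLike.norm_conj]
  exact mul_lt_one_of_nonneg_of_lt_one_left (norm_nonneg w) hw hz.le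

lemma normSq_one_sub_conj_mul (a z : ℂ) :
    normSq (1 - conj a * z) = normSq (a - z) + (1 - normSq a) * (1 - normSq z) := by
  simp only [normSq_apply, sub_re, sub_im, mul_re, mul_im, one_re, one_im, conj_re, conj_im]
  ring

lemma norm_mobius_lt_one {a z : ℂ} (ha : ‖a‖ < 1) (hz : ‖z‖ < 1) : ‖mobius a z‖ < 1 := by
  have ha' : normSq a < 1 := by rwa [← Complex.sq_norm, sq_lt_one_iff₀ (norm_nonneg a)]
  have hz' : normSq z < 1 := by rwa [← Complex.sq_norm, sq_lt_one_iff₀ (norm_nonneg z)]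
  have hpos : 0 < normSq (1 - conj a * z) := by
    rw [normSq_one_sub_conj_mul]
    nlinarith [normSq_nonneg (a - z), mul_pos (sub_pos.2 ha') (sub_pos.2 hz')]
  rw [← sq_lt_one_iff₀ (norm_nonneg _), Complex.sq_norm, mobius, map_div₀, div_lt_one hpos,
    normSq_one_sub_conj_mul]
  nlinarith [mul_pos (sub_pos.2 ha') (sub_pos.2 hz')]

lemma one_sub_norm_le_norm_one_add_conj_mul_mobius (w : ℂ) {a z : ℂ} (ha : ‖a‖ < 1)
    (hz : ‖z‖ < 1) : 1 - ‖w‖ ≤ ‖1 + conj w * mobius a z‖ := by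
  have h : ‖conj w * mobius a z‖ ≤ ‖w‖ := by
    rw [norm_mul, RCLike.norm_conj]
    exact mul_le_of_le_one_right (norm_nonneg w) (norm_mobius_lt_one ha hz).le
  calc 1 - ‖w‖ ≤ ‖(1 : ℂ)‖ - ‖-(conj w * mobius a z)‖ := by rw [norm_one, norm_neg]; linarith
    _ ≤ ‖1 + conj w * mobius a z‖ := by
      simpa using norm_sub_norm_le (1 : ℂ) (-(conj w * mobius a z))

lemma conj_mul_mobius_ofReal_mul (w z : ℂ) (t : ℝ) :
    conj w * mobius (t * w) z = (t * ‖w‖ ^ 2 - conj w * z) / (1 - t * (conj w * z)) := by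
  rw [mobius, map_mul, conj_ofReal, ← conj_mul']
  ring

lemma wstar_eq {w : ℂ} (hw0 : w ≠ 0) (hw : ‖w‖ ≤ 1) :
    wstar w = ((1 + √(1 - ‖w‖ ^ 2))⁻¹ : ℝ) * w := by
  have hq := Real.sq_sqrt (sub_nonneg.2 (pow_le_one₀ (n := 2) (norm_nonneg w) hw))
  have hr : ‖w‖ ^ 2 ≠ 0 := by positivity
  rw [wstar]
  congr 3
  field_simp
  linear_combination -hq

lemma norm_wstar_le {w : ℂ} (hw0 : w ≠ 0) (hw : ‖w‖ ≤ 1) : ‖wstar w‖ ≤ ‖w‖ := by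
  rw [wstar_eq hw0 hw, norm_mul, norm_real, Real.norm_of_nonneg (by positivity)]
  exact mul_le_of_le_one_left (norm_nonneg w) (inv_le_one_of_one_le₀ (by simp [Real.sqrt_nonneg]))

lemma normSq_add_le_re_of_mem_carlesonBox {w z : ℂ} (hw : ‖w‖ < 1) (hz : z ∈ carlesonBox w) :
    ‖w‖ ^ 2 + normSq (conj w * z) ≤ (1 + ‖w‖ ^ 2) * (conj w * z).re := by
  obtain ⟨hzD, hbox⟩ := hz
  have hζ := norm_conj_mul_lt_one hw (mem_ball_zero_iff.mp hzD)
  have hpos : 0 < normSq (1 - conj w * z) := normSq_pos.2 (sub_ne_zero.2 (by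
    rintro h; rw [← h, norm_one] at hζ; exact lt_irrefl 1 hζ))
  have hmob := conj_mul_mobius_ofReal_mul w z 1
  simp only [ofReal_one, one_mul] at hmob
  rw [hmob, div_re, ← add_div, div_le_iff₀ hpos, zero_mul] at hbox
  simp only [normSq_apply, sub_re, sub_im, one_re, one_im, ← ofReal_pow, ofReal_re,
    ofReal_im] at hbox ⊢
  nlinarith

lemma norm_sub_le_mul_norm_sub_of_normSq_le {q : ℝ} (hq : 0 ≤ q) {ζ : ℂ}
    (hζ : (1 - q ^ 2) + normSq ζ ≤ (2 - q ^ 2) * ζ.re) :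
    ‖(((2 - q) * (1 + q) : ℝ) : ℂ) - (2 + q : ℝ) * ζ‖ ≤ q * ‖((1 + q : ℝ) : ℂ) - ζ‖ := by
  -- q²‖(1 + q) - ζ‖² - ‖(2 - q)(1 + q) - (2 + q)ζ‖² = 4(1 + q)((2 - q²) Re ζ - (1 - q²) - ‖ζ‖²)
  rw [← sq_le_sq₀ (norm_nonneg _) (by positivity), mul_pow, Complex.sq_norm, Complex.sq_norm]
  simp only [normSq_apply, sub_re, sub_im, re_ofReal_mul, im_ofReal_mul, ofReal_re,
    ofReal_im] at hζ ⊢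
  nlinarith [mul_le_mul_of_nonneg_left hζ (by positivity : (0 : ℝ) ≤ 4 * (1 + q))]

lemma norm_one_add_conj_mul_mobius_wstar_le {w z : ℂ} (hw0 : w ≠ 0) (hw : ‖w‖ < 1)
    (hz : z ∈ carlesonBox w) : ‖1 + conj w * mobius (wstar w) z‖ ≤ √(1 - ‖w‖ ^ 2) := by
  have hbox := normSq_add_le_re_of_mem_carlesonBox hw hz
  have hws := wstar_eq hw0 hw.le
  set q := √(1 - ‖w‖ ^ 2)
  have hq0 : 0 ≤ q := Real.sqrt_nonneg _
  have hq : q ^ 2 = 1 - ‖w‖ ^ 2 := Real.sq_sqrt (by nlinarith [norm_nonneg w])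
  set ζ := conj w * z
  have hζ : ‖ζ‖ < 1 := norm_conj_mul_lt_one hw (mem_ball_zero_iff.mp hz.1)
  have hD : ((1 + q : ℝ) : ℂ) - ζ ≠ 0 := by
    intro h
    rw [sub_eq_zero] at h
    rw [← h, norm_real, Real.norm_of_nonneg (by positivity)] at hζ
    linarith
  have hE : 1 + conj w * mobius (wstar w) z
      = (((2 - q) * (1 + q) : ℝ) - (2 + q : ℝ) * ζ) / ((1 + q : ℝ) - ζ) := by
    have hr : (‖w‖ : ℂ) ^ 2 = 1 - (q : ℂ) ^ 2 := by
      exact_mod_cast (by linarith : ‖w‖ ^ 2 = 1 - q ^ 2)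
    have h1q : (1 + q : ℂ) ≠ 0 := by exact_mod_cast (by positivity : (1 + q : ℝ) ≠ 0)
    rw [hws, conj_mul_mobius_ofReal_mul, hr]
    push_cast at hD ⊢
    rw [show 1 - (1 + (q : ℂ))⁻¹ * ζ = (1 + q - ζ) / (1 + q) by field_simp]
    field_simp
    ring
  rw [hE, norm_div, div_le_iff₀ (norm_pos_iff.2 hD)]
  exact norm_sub_le_mul_norm_sub_of_normSq_le hq0 (by rw [hq]; linear_combination hbox)

lemma re_betaB (w z : ℂ) :
    (betaB w z).re = Real.log (Real.exp 1 / ‖1 + conj w * mobius (wstar w) z‖) := by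
  rw [betaB, Complex.log_re, norm_div, norm_real, Real.norm_of_nonneg (Real.exp_pos 1).le]

lemma log_exp_one_div_comparable {ρ B : ℝ} (hρ : 0 < ρ) (hρ1 : ρ ≤ 1) (hlo : ρ / 2 ≤ B)
    (hhi : B ≤ √ρ) :
    1 / 2 * Real.log (Real.exp 1 / ρ) ≤ Real.log (Real.exp 1 / B) ∧
      Real.log (Real.exp 1 / B) ≤ 2 * Real.log (Real.exp 1 / ρ) := by
  have hB : 0 < B := by linarith
  rw [Real.log_div (Real.exp_ne_zero 1) hB.ne', Real.log_div (Real.exp_ne_zero 1) hρ.ne',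
    Real.log_exp]
  have hup : Real.log B ≤ Real.log ρ / 2 := by
    rw [← Real.log_sqrt hρ.le]; exact Real.log_le_log hB hhi
  have hlow : Real.log ρ - Real.log 2 ≤ Real.log B := by
    rw [← Real.log_div hρ.ne' two_ne_zero]; exact Real.log_le_log (by positivity) hlo
  have hρneg : Real.log ρ ≤ 0 := Real.log_nonpos hρ.le hρ1
  have hlog2 : Real.log 2 < 1 := by linarith [Real.log_two_lt_d9]
  constructor <;> linarith

/-- There are absolute constants `c₁, c₂ > 0` such that on the Carleson box
`S(I_w)` the real part of `β_w` is comparable to `log(e/(1-|w|²))`. -/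
theorem betaB_re_comparable_on_carlesonBox :
    ∃ c₁ > 0, ∃ c₂ > 0, ∀ w ∈ unitDisc, w ≠ 0 → ∀ z ∈ carlesonBox w,
      c₁ * Real.log (Real.exp 1 / (1 - ‖w‖ ^ 2)) ≤ (betaB w z).re ∧
        (betaB w z).re ≤ c₂ * Real.log (Real.exp 1 / (1 - ‖w‖ ^ 2)) := by
  refine ⟨1 / 2, by norm_num, 2, by norm_num, fun w hw hw0 z hz => ?_⟩
  have hw1 : ‖w‖ < 1 := mem_ball_zero_iff.mp hw
  have hz1 : ‖z‖ < 1 := mem_ball_zero_iff.mp hz.1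
  rw [re_betaB]
  refine log_exp_one_div_comparable (by nlinarith [norm_nonneg w]) (by nlinarith [norm_nonneg w])
    ?_ (norm_one_add_conj_mul_mobius_wstar_le hw0 hw1 hz)
  calc (1 - ‖w‖ ^ 2) / 2 ≤ 1 - ‖w‖ := by nlinarith [norm_nonneg w]
    _ ≤ _ := one_sub_norm_le_norm_one_add_conj_mul_mobius w
      ((norm_wstar_le hw0 hw1.le).trans_lt hw1) hz1
end
end

section
/- For every w ∈ 𝔻 \ {0} and every z ∈ 𝔻 \ S(I_{w*}), one has |β_w(z)| ≤ 3. Consequently, for every δ > 0 there exists δ′ > 0 such that |β_w(z)| ≤ 3 whenever w ∈ 𝔻 \ {0} with 1 − |w| ≤ δ′ and z ∈ 𝔻 with |z| ≤ 1 − δ. -/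
open Complex MeasureTheory Set Filter

noncomputable section

/-! With `u = conj w · φ_{w*}(z)` one has `‖u‖ ≤ 1`, and since `w*` is a positive multiple of `w`,
`z ∉ S(I_{w*})` gives `Re u > 0`. So `ζ = 1 + u` satisfies `1 ≤ Re ζ` and `‖ζ‖ ≤ 2`, whence
`‖Log (e / ζ)‖ ≤ |1 - log ‖ζ‖| + |arg ζ| ≤ 1 + π / 2 < 3`. For the second claim,
`‖w*‖ = ‖w‖ / (1 + √(1 - ‖w‖²)) → 1` as `‖w‖ → 1`, and the disc `‖z‖ ≤ ‖w*‖` misses the interior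
of `S(I_{w*})`. -/

open ComplexConjugate

theorem sq_norm_one_sub_conj_mul_sub_sq_norm_sub (a z : ℂ) :
    ‖1 - conj a * z‖ ^ 2 - ‖a - z‖ ^ 2 = (1 - ‖a‖ ^ 2) * (1 - ‖z‖ ^ 2) := by
  simp only [Complex.sq_norm, Complex.normSq_apply, Complex.sub_re, Complex.sub_im,
    Complex.mul_re, Complex.mul_im, Complex.conj_re, Complex.conj_im, Complex.one_re,
    Complex.one_im]
  ring

theorem norm_mobius_le_one {a z : ℂ} (ha : ‖a‖ ≤ 1) (hz : ‖z‖ ≤ 1) : ‖mobius a z‖ ≤ 1 := by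
  have hsq : ‖a - z‖ ^ 2 ≤ ‖1 - conj a * z‖ ^ 2 := by
    have := sq_norm_one_sub_conj_mul_sub_sq_norm_sub a z
    nlinarith [mul_nonneg (sub_nonneg.2 (pow_le_one₀ (norm_nonneg a) ha (n := 2)))
      (sub_nonneg.2 (pow_le_one₀ (norm_nonneg z) hz (n := 2)))]
  rw [mobius, norm_div]
  exact div_le_one_of_le₀ (le_of_sq_le_sq hsq (norm_nonneg _)) (norm_nonneg _)

theorem re_div_one_sub_nonneg {r : ℝ} {s : ℂ} (hs : ‖s‖ ≤ r) (hr : r ≤ 1) :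
    0 ≤ ((r - s) / (1 - s)).re := by
  rw [Complex.div_re]
  have hnorm : ‖s‖ ^ 2 = s.re ^ 2 + s.im ^ 2 := by
    rw [Complex.sq_norm, Complex.normSq_apply]; ring
  have hre : s.re ≤ ‖s‖ := Complex.re_le_norm s
  -- the numerator is at least `(r - ‖s‖) * (1 - ‖s‖)`
  have hnum : 0 ≤ (r - s.re) * (1 - s.re) + s.im * s.im := by
    nlinarith [mul_nonneg (sub_nonneg.2 hs) (sub_nonneg.2 (hs.trans hr))]
  rw [← add_div]
  apply div_nonneg _ (Complex.normSq_nonneg _)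
  simpa using hnum

theorem re_conj_mul_mobius_nonneg {u z : ℂ} (hzu : ‖z‖ ≤ ‖u‖) (hu : ‖u‖ ≤ 1) :
    0 ≤ (conj u * mobius u z).re := by
  have hrewrite : conj u * mobius u z = ((‖u‖ ^ 2 : ℝ) - conj u * z) / (1 - conj u * z) := by
    rw [mobius, mul_div_assoc', mul_sub, Complex.conj_mul', Complex.ofReal_pow]
  rw [hrewrite]
  apply re_div_one_sub_nonneg _ (pow_le_one₀ (norm_nonneg u) hu)
  rw [norm_mul, Complex.norm_conj, sq]
  exact mul_le_mul_of_nonneg_left hzu (norm_nonneg u)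

theorem norm_log_exp_one_div_le_three {ζ : ℂ} (hre : 1 ≤ ζ.re) (hnorm : ‖ζ‖ ≤ 2) :
    ‖log (Real.exp 1 / ζ)‖ ≤ 3 := by
  have hζ : 1 ≤ ‖ζ‖ := hre.trans (Complex.re_le_norm ζ)
  have hζ0 : ζ ≠ 0 := norm_pos_iff.1 (by linarith)
  set x : ℂ := Real.exp 1 / ζ with hx
  have hlog : |Real.log ‖x‖| ≤ 1 := by
    rw [hx, norm_div, Complex.norm_real, Real.norm_of_nonneg (Real.exp_pos 1).le,
      Real.log_div (Real.exp_pos 1).ne' (by linarith), Real.log_exp, abs_le]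
    have := Real.log_le_sub_one_of_pos (show 0 < ‖ζ‖ by linarith)
    have := Real.log_nonneg hζ
    constructor <;> linarith
  have harg : |arg x| ≤ Real.pi / 2 := by
    rw [Complex.abs_arg_le_pi_div_two_iff, hx, div_eq_mul_inv, Complex.re_ofReal_mul,
      Complex.inv_re]
    exact mul_nonneg (Real.exp_pos 1).le (div_nonneg (by linarith) (Complex.normSq_nonneg _))
  calc ‖log x‖ ≤ |(log x).re| + |(log x).im| := Complex.norm_le_abs_re_add_abs_im _
    _ = |Real.log ‖x‖| + |arg x| := by rw [Complex.log_re, Complex.log_im]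
    _ ≤ 1 + Real.pi / 2 := add_le_add hlog harg
    _ ≤ 3 := by linarith [Real.pi_le_four]

theorem norm_wstar {w : ℂ} (hw : ‖w‖ ≤ 1) :
    ‖wstar w‖ = ‖w‖ / (1 + √(1 - ‖w‖ ^ 2)) := by
  rcases eq_or_ne w 0 with rfl | hw0
  · simp [wstar]
  have hr : 0 < ‖w‖ := norm_pos_iff.2 hw0
  have hs : √(1 - ‖w‖ ^ 2) ≤ 1 := Real.sqrt_le_one.2 (by nlinarith)
  have hs2 : √(1 - ‖w‖ ^ 2) ^ 2 = 1 - ‖w‖ ^ 2 := Real.sq_sqrt (by nlinarith)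
  rw [wstar, norm_mul, Complex.norm_real, Real.norm_of_nonneg (by positivity)]
  field_simp
  nlinarith

theorem norm_wstar_le_one {w : ℂ} (hw : ‖w‖ ≤ 1) : ‖wstar w‖ ≤ 1 := by
  rw [norm_wstar hw]
  exact div_le_one_of_le₀ (by linarith [Real.sqrt_nonneg (1 - ‖w‖ ^ 2)]) (by positivity)

theorem sub_sqrt_one_sub_sq_le_norm_wstar {w : ℂ} (hw : ‖w‖ ≤ 1) :
    ‖w‖ - √(1 - ‖w‖ ^ 2) ≤ ‖wstar w‖ := by
  have hs : √(1 - ‖w‖ ^ 2) ≤ 1 := Real.sqrt_le_one.2 (by nlinarith)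
  rw [norm_wstar hw, le_div_iff₀ (by positivity)]
  nlinarith [norm_nonneg w, Real.sqrt_nonneg (1 - ‖w‖ ^ 2)]

theorem exists_one_sub_norm_wstar_le {δ : ℝ} (hδ : 0 < δ) :
    ∃ δ' > 0, ∀ w : ℂ, ‖w‖ ≤ 1 → 1 - ‖w‖ ≤ δ' → 1 - ‖wstar w‖ ≤ δ := by
  refine ⟨min (δ / 2) (δ ^ 2 / 8), by positivity, fun w hw hwδ => ?_⟩
  have hsqrt : √(1 - ‖w‖ ^ 2) ≤ δ / 2 := by
    rw [Real.sqrt_le_left (by positivity)]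
    nlinarith [min_le_right (δ / 2) (δ ^ 2 / 8), norm_nonneg w]
  linarith [sub_sqrt_one_sub_sq_le_norm_wstar hw, min_le_left (δ / 2) (δ ^ 2 / 8)]

theorem norm_betaB_le_three {w z : ℂ} (hw0 : w ≠ 0) (hw : ‖w‖ ≤ 1) (hz : ‖z‖ ≤ 1)
    (hre : 0 ≤ (conj (wstar w) * mobius (wstar w) z).re) : ‖betaB w z‖ ≤ 3 := by
  set u := conj w * mobius (wstar w) z
  have hu : ‖u‖ ≤ 1 := by
    rw [norm_mul, Complex.norm_conj]
    exact mul_le_one₀ hw (norm_nonneg _) (norm_mobius_le_one (norm_wstar_le_one hw) hz)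
  have hu_re : 0 ≤ u.re := by
    have hscale : 0 < (1 - √(1 - ‖w‖ ^ 2)) / ‖w‖ ^ 2 := by
      have : √(1 - ‖w‖ ^ 2) < 1 := by
        rw [Real.sqrt_lt' one_pos]
        nlinarith [norm_pos_iff.2 hw0]
      exact div_pos (by linarith) (by positivity)
    rw [wstar, map_mul, Complex.conj_ofReal, mul_assoc, Complex.re_ofReal_mul] at hre
    exact nonneg_of_mul_nonneg_right hre hscale
  apply norm_log_exp_one_div_le_three
  · rw [Complex.add_re, Complex.one_re]
    linarith
  · linarith [norm_add_le 1 u, norm_one (α := ℂ)]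

/-- Outside the Carleson box `S(I_{w*})` the building block `β_w` is
bounded by `3`; in particular for every `δ > 0` there is `δ' > 0` such that
`|β_w(z)| ≤ 3` whenever `1 - |w| ≤ δ'` and `|z| ≤ 1 - δ`. -/
theorem betaB_bounded_off_carlesonBox :
    (∀ w ∈ unitDisc, w ≠ 0 → ∀ z ∈ unitDisc, z ∉ carlesonBox (wstar w) →
      ‖betaB w z‖ ≤ 3) ∧
    (∀ δ > 0, ∃ δ' > 0, ∀ w ∈ unitDisc, w ≠ 0 → 1 - ‖w‖ ≤ δ' →
      ∀ z : ℂ, ‖z‖ ≤ 1 - δ → ‖betaB w z‖ ≤ 3) := by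
  have mem_unitDisc {z : ℂ} : z ∈ unitDisc ↔ ‖z‖ < 1 := mem_ball_zero_iff
  refine ⟨fun w hw hw0 z hz hbox => ?_, fun δ hδ => ?_⟩
  · have hre : 0 < (conj (wstar w) * mobius (wstar w) z).re :=
      not_le.1 fun hle => hbox ⟨hz, hle⟩
    exact norm_betaB_le_three hw0 (mem_unitDisc.1 hw).le (mem_unitDisc.1 hz).le hre.le
  · obtain ⟨δ', hδ', hwstar⟩ := exists_one_sub_norm_wstar_le hδ
    refine ⟨δ', hδ', fun w hw hw0 hwδ z hzδ => ?_⟩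
    have hw1 : ‖w‖ ≤ 1 := (mem_unitDisc.1 hw).le
    have hzw : ‖z‖ ≤ ‖wstar w‖ := by linarith [hwstar w hw1 hwδ]
    exact norm_betaB_le_three hw0 hw1 (hzw.trans (norm_wstar_le_one hw1))
      (re_conj_mul_mobius_nonneg hzw (norm_wstar_le_one hw1))
end
end

section
/- Let H be holomorphic on 𝔻 with inf_{z∈𝔻} |H(z)| > 0. Let F ∈ 𝓑 and suppose that the function z ↦ ∫₀^z F(ζ) H′(ζ)/H(ζ) dζ also belongs to 𝓑. Then the quotient F/H belongs to 𝓑. -/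
open Complex MeasureTheory Set Filter

noncomputable section

/-!
Since `(F/H)' = (F' - F H'/H) / H` and `|H| ≥ c`, it suffices that `F H'/H` is bounded in the
Bloch sense. On the disc `F H'/H` has a primitive `G`, so by the fundamental theorem of calculus
along the segment `[0, z]` the given radial integral is `G - G 0`, whose derivative is `F H'/H`.
-/

section RadialPrimitive

variable {E : Type*} [NormedAddCommGroup E] [NormedSpace ℂ E] [CompleteSpace E]

theorem StarConvex.smul_integral_comp_ofReal_mul_eq_sub {U : Set ℂ} (hU : StarConvex ℝ 0 U)
    {g G : ℂ → E} (hG : ∀ z ∈ U, HasDerivAt G (g z) z) (hg : ContinuousOn g U)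
    {z : ℂ} (hz : z ∈ U) :
    z • ∫ t in (0:ℝ)..1, g ((t : ℂ) * z) = G z - G 0 := by
  have hseg : ∀ t ∈ uIcc (0:ℝ) 1, (t : ℂ) * z ∈ U := fun t ht => by
    rw [uIcc_of_le zero_le_one] at ht
    simpa [Complex.real_smul] using hU.smul_mem hz ht.1 ht.2
  have hderiv : ∀ t ∈ uIcc (0:ℝ) 1,
      HasDerivAt (fun t : ℝ => G ((t : ℂ) * z)) (z • g ((t : ℂ) * z)) t := fun t ht => by
    have hline : HasDerivAt (fun t : ℝ => (t : ℂ) * z) z t := by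
      simpa using ((hasDerivAt_id t).ofReal_comp).mul_const z
    have := ((hG _ (hseg t ht)).hasFDerivAt.restrictScalars ℝ).comp_hasDerivAt t hline
    simp only [ContinuousLinearMap.coe_restrictScalars',
      ContinuousLinearMap.toSpanSingleton_apply] at this
    exact this
  have hcont : ContinuousOn (fun t : ℝ => z • g ((t : ℂ) * z)) (uIcc 0 1) :=
    (hg.comp (by fun_prop) hseg).const_smul z
  rw [← intervalIntegral.integral_smul, intervalIntegral.integral_eq_sub_of_hasDerivAt hderiv
    hcont.intervalIntegrable]
  simp

theorem hasDerivAt_smul_integral_comp_ofReal_mul {r : ℝ} {g : ℂ → E}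
    (hg : DifferentiableOn ℂ g (Metric.ball 0 r)) {z : ℂ} (hz : z ∈ Metric.ball 0 r) :
    HasDerivAt (fun w => w • ∫ t in (0:ℝ)..1, g ((t : ℂ) * w)) (g z) z := by
  obtain ⟨G, hG⟩ := hg.isExactOn_ball
  have heq : (fun w => w • ∫ t in (0:ℝ)..1, g ((t : ℂ) * w)) =ᶠ[nhds z] fun w => G w - G 0 :=
    Filter.eventually_of_mem (Metric.isOpen_ball.mem_nhds hz) fun w hw =>
      ((convex_ball 0 r).starConvex (Metric.mem_ball_self (Metric.pos_of_mem_ball hz))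
        ).smul_integral_comp_ofReal_mul_eq_sub hG hg.continuousOn hw
  exact ((hG z hz).sub_const (G 0)).congr_of_eventuallyEq heq

end RadialPrimitive

theorem blochSemi_div_le {F H : ℂ → ℂ} {z : ℂ} {c : ℝ} (hc : 0 < c) (hz : ‖z‖ ≤ 1)
    (hF : DifferentiableAt ℂ F z) (hH : DifferentiableAt ℂ H z) (hcH : c ≤ ‖H z‖) :
    blochSemi (fun w => F w / H w) z ≤
      (blochSemi F z + ‖F z * (deriv H z / H z)‖ * (1 - ‖z‖ ^ 2)) / c := by
  have hH0 : H z ≠ 0 := norm_pos_iff.1 (hc.trans_le hcH)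
  have hweight : 0 ≤ 1 - ‖z‖ ^ 2 := by nlinarith [norm_nonneg z]
  have hderiv : deriv (fun w => F w / H w) z = (deriv F z - F z * (deriv H z / H z)) / H z := by
    rw [deriv_fun_div hF hH hH0]
    field_simp
  unfold blochSemi
  rw [hderiv, norm_div]
  calc ‖deriv F z - F z * (deriv H z / H z)‖ / ‖H z‖ * (1 - ‖z‖ ^ 2)
      ≤ (‖deriv F z‖ + ‖F z * (deriv H z / H z)‖) / c * (1 - ‖z‖ ^ 2) := by
        gcongr
        exact norm_sub_le _ _
    _ = _ := by ring

/-- If `H` is holomorphic with `inf_𝔻 |H| > 0`, `F` is a Bloch function and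
`z ↦ ∫₀^z F(ζ) H'(ζ)/H(ζ) dζ` is a Bloch function, then `F/H` is a Bloch function. -/
theorem quotient_isBloch
    (H F : ℂ → ℂ) (hH : DifferentiableOn ℂ H unitDisc)
    (hinf : ∃ c > 0, ∀ z ∈ unitDisc, c ≤ ‖H z‖)
    (hF : IsBloch F)
    (hT : IsBloch (fun z =>
      z * ∫ t in (0:ℝ)..1, F ((t : ℂ) * z) * (deriv H ((t : ℂ) * z) / H ((t : ℂ) * z)))) :
    IsBloch (fun z => F z / H z) := by
  obtain ⟨c, hc, hcH⟩ := hinf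
  have hH0 : ∀ z ∈ unitDisc, H z ≠ 0 := fun z hz => norm_pos_iff.1 (hc.trans_le (hcH z hz))
  have hFlogH : DifferentiableOn ℂ (fun z => F z * (deriv H z / H z)) unitDisc :=
    hF.1.mul ((hH.deriv Metric.isOpen_ball).div hH hH0)
  have hTderiv : ∀ z ∈ unitDisc, deriv (fun z =>
      z * ∫ t in (0:ℝ)..1, F ((t : ℂ) * z) * (deriv H ((t : ℂ) * z) / H ((t : ℂ) * z))) z =
      F z * (deriv H z / H z) := fun z hz =>
    (hasDerivAt_smul_integral_comp_ofReal_mul hFlogH hz).deriv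
  obtain ⟨CF, hCF⟩ := hF.2
  obtain ⟨CT, hCT⟩ := hT.2
  refine ⟨hF.1.div hH hH0, (CF + CT) / c, fun z hz => ?_⟩
  have hz_nhds : unitDisc ∈ nhds z := Metric.isOpen_ball.mem_nhds hz
  calc blochSemi (fun z => F z / H z) z
      ≤ (blochSemi F z + ‖F z * (deriv H z / H z)‖ * (1 - ‖z‖ ^ 2)) / c :=
        blochSemi_div_le hc (mem_ball_zero_iff.1 hz).le (hF.1.differentiableAt hz_nhds)
          (hH.differentiableAt hz_nhds) (hcH z hz)
    _ ≤ (CF + CT) / c := by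
        gcongr
        · exact hCF z hz
        · simpa only [blochSemi, hTderiv z hz] using hCT z hz
end
end
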